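/- arXiv:1207.0707 — 2 statements merged into one kernel-verified Lean document; each statement's English description precedes it below -/
import Mathlib

section
/- For λ with Re λ > 0 or (Re λ ≥ 0 and (λ,ξ) ≠ (0,0)), and ξ ∈ ℝ^{n−1}, set ω = √(ρλ + μ|ξ|²) (principal branch) and ζ = √μ ξ. Then the 2×2-block matrix M = [[1, −iζ/ω],[iζᵀ/ω, |ζ|/ω]] (acting on ℝ^{n−1} × ℝ, with iζ/ω a column and iζᵀ/ω a row) has determinant-type factor d = (1 − |ζ|/ω)(|ζ|/ω) and, when d ≠ 0, its inverse is d^{−1} [[d·I − (iζ⊗iζ)/ω², iζ/ω],[−iζᵀ/ω, 1]]. -/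
open Complex

private lemma lemA (ω nz D S a vk zk j : ℂ)
    (hD : D * ((1 - nz/ω) * (nz/ω)) = 1) (hj : j^2 = -1) :
    D * ((1 - nz/ω) * (nz/ω) * vk + (S / ω ^ 2) * zk + (j * a / ω) * zk)
        - (j * zk / ω) * (D * (-(j/ω) * S + a)) = vk := by
  linear_combination vk*hD + (D*S*zk/ω^2)*hj

private lemma lemB (ω nz D S a j : ℂ)
    (hD : D * ((1 - nz/ω) * (nz/ω)) = 1) (hj : j^2 = -1) :
    (j / ω) * (D * ((1 - nz/ω) * (nz/ω) * S + (S / ω ^ 2) * nz^2 + (j * a / ω) * nz^2))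
      + (nz / ω) * (D * (-(j/ω) * S + a)) = a := by
  linear_combination a*hD + (D*a*nz^2/ω^2)*hj

private lemma lemC (ω nz D S a vk zk j : ℂ)
    (hD : D * ((1 - nz/ω) * (nz/ω)) = 1) (hj : j^2 = -1) :
    D * ((1 - nz/ω) * (nz/ω) * (vk - (j * zk / ω) * a)
      + ((S - (j * nz^2 / ω) * a) / ω ^ 2) * zk
      + (j * ((j / ω) * S + (nz / ω) * a) / ω) * zk) = vk := by
  linear_combination vk*hD + (D*S*zk/ω^2)*hj

private lemma lemD (ω nz D S a j : ℂ)
    (hD : D * ((1 - nz/ω) * (nz/ω)) = 1) (hj : j^2 = -1) :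
    D * (-(j/ω) * (S - (j * nz^2 / ω) * a) + ((j / ω) * S + (nz / ω) * a)) = a := by
  linear_combination a*hD + (D*a*nz^2/ω^2)*hj

/-- Boundary symbol inversion for the Dirichlet (α=0, β=0) half-space Stokes
problem: with `ω = √(ρλ + μ|ξ|²)` (principal branch, `Re ω > 0`), `ζ = √μ ξ`
and `d = (1 − |ζ|/ω)(|ζ|/ω) ≠ 0`, the block matrix
`M = [[I, −iζ/ω],[iζᵀ/ω, |ζ|/ω]]` has inverse
`d⁻¹ [[d·I − (iζ⊗iζ)/ω², iζ/ω],[−iζᵀ/ω, 1]]`. -/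
theorem halfspace_dirichlet_symbol_inverse {m : ℕ}
    (ρ μ : ℝ) (hρ : 0 < ρ) (hμ : 0 < μ)
    (lam : ℂ) (hlam : 0 ≤ lam.re) (ξ : EuclideanSpace ℝ (Fin m))
    (hne : lam ≠ 0 ∨ ξ ≠ 0)
    (ω : ℂ) (hω2 : ω ^ 2 = ρ * lam + μ * ‖ξ‖ ^ 2) (hωre : 0 < ω.re)
    (ζ : EuclideanSpace ℝ (Fin m)) (hζ : ζ = Real.sqrt μ • ξ)
    (d : ℂ) (hd0 : d = (1 - (‖ζ‖ : ℂ) / ω) * ((‖ζ‖ : ℂ) / ω)) (hd : d ≠ 0)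
    (M N : (Fin m → ℂ) × ℂ → (Fin m → ℂ) × ℂ)
    (hM : M = fun va =>
      (fun k => va.1 k - (Complex.I * (ζ k : ℂ) / ω) * va.2,
       (Complex.I / ω) * (∑ j, (ζ j : ℂ) * va.1 j) + ((‖ζ‖ : ℂ) / ω) * va.2))
    (hN : N = fun va =>
      (fun k => d⁻¹ * (d * va.1 k + ((∑ j, (ζ j : ℂ) * va.1 j) / ω ^ 2) * (ζ k : ℂ)
          + (Complex.I * va.2 / ω) * (ζ k : ℂ)),
       d⁻¹ * (-(Complex.I / ω) * (∑ j, (ζ j : ℂ) * va.1 j) + va.2))) :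
    ∀ va : (Fin m → ℂ) × ℂ, M (N va) = va ∧ N (M va) = va := by
  subst hM hN hd0
  have hD : ((1 - (‖ζ‖ : ℂ) / ω) * ((‖ζ‖ : ℂ) / ω))⁻¹
      * ((1 - (‖ζ‖ : ℂ) / ω) * ((‖ζ‖ : ℂ) / ω)) = 1 := inv_mul_cancel₀ hd
  have hS2 : (∑ j, (ζ j : ℂ) * (ζ j : ℂ)) = ((‖ζ‖ : ℂ))^2 := by
    have h1 : ‖ζ‖ ^ 2 = ∑ j, (ζ j) ^ 2 := by
      rw [EuclideanSpace.norm_eq, Real.sq_sqrt (by positivity)]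
      simp [Real.norm_eq_abs, sq_abs]
    rw [show ((‖ζ‖ : ℝ) : ℂ)^2 = ((‖ζ‖^2 : ℝ) : ℂ) by push_cast; ring, h1]
    push_cast
    exact Finset.sum_congr rfl fun j _ => (sq ((ζ j : ℂ))).symm ▸ rfl
  rintro ⟨v, a⟩
  constructor
  · refine Prod.ext (funext fun k => ?_) ?_
    · exact lemA ω (‖ζ‖ : ℂ) _ (∑ j, (ζ j : ℂ) * v j) a (v k) (ζ k) Complex.I hD Complex.I_sq
    · dsimp only
      have hsum : (∑ jx, (ζ jx : ℂ) * (((1 - (‖ζ‖ : ℂ) / ω) * ((‖ζ‖ : ℂ) / ω))⁻¹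
            * ((1 - (‖ζ‖ : ℂ) / ω) * ((‖ζ‖ : ℂ) / ω) * v jx
              + ((∑ j, (ζ j : ℂ) * v j) / ω ^ 2) * (ζ jx : ℂ)
              + (Complex.I * a / ω) * (ζ jx : ℂ))))
          = ((1 - (‖ζ‖ : ℂ) / ω) * ((‖ζ‖ : ℂ) / ω))⁻¹
            * ((1 - (‖ζ‖ : ℂ) / ω) * ((‖ζ‖ : ℂ) / ω) * (∑ j, (ζ j : ℂ) * v j)
              + ((∑ j, (ζ j : ℂ) * v j) / ω ^ 2) * ((‖ζ‖ : ℂ))^2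
              + (Complex.I * a / ω) * ((‖ζ‖ : ℂ))^2) := by
        rw [← hS2]
        have step : ∀ jx : Fin m, (ζ jx : ℂ) * (((1 - (‖ζ‖ : ℂ) / ω) * ((‖ζ‖ : ℂ) / ω))⁻¹
            * ((1 - (‖ζ‖ : ℂ) / ω) * ((‖ζ‖ : ℂ) / ω) * v jx
              + ((∑ j, (ζ j : ℂ) * v j) / ω ^ 2) * (ζ jx : ℂ)
              + (Complex.I * a / ω) * (ζ jx : ℂ)))
            = (((1 - (‖ζ‖ : ℂ) / ω) * ((‖ζ‖ : ℂ) / ω))⁻¹ * ((1 - (‖ζ‖ : ℂ) / ω) * ((‖ζ‖ : ℂ) / ω)))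
                * ((ζ jx : ℂ) * v jx)
              + (((1 - (‖ζ‖ : ℂ) / ω) * ((‖ζ‖ : ℂ) / ω))⁻¹ * (((∑ j, (ζ j : ℂ) * v j) / ω ^ 2)
                  + Complex.I * a / ω)) * ((ζ jx : ℂ) * (ζ jx : ℂ)) := fun jx => by ring
        rw [Finset.sum_congr rfl fun jx _ => step jx, Finset.sum_add_distrib,
          ← Finset.mul_sum, ← Finset.mul_sum]
        ring
      rw [hsum]
      exact lemB ω (‖ζ‖ : ℂ) _ (∑ j, (ζ j : ℂ) * v j) a Complex.I hD Complex.I_sq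
  · have hsum2 : (∑ jx, (ζ jx : ℂ) * (v jx - (Complex.I * (ζ jx : ℂ) / ω) * a))
        = (∑ j, (ζ j : ℂ) * v j) - (Complex.I * ((‖ζ‖ : ℂ))^2 / ω) * a := by
      rw [← hS2]
      have step : ∀ jx : Fin m, (ζ jx : ℂ) * (v jx - (Complex.I * (ζ jx : ℂ) / ω) * a)
          = (ζ jx : ℂ) * v jx - (Complex.I * a / ω) * ((ζ jx : ℂ) * (ζ jx : ℂ)) := fun jx => by ring
      rw [Finset.sum_congr rfl fun jx _ => step jx, Finset.sum_sub_distrib, ← Finset.mul_sum]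
      ring
    refine Prod.ext (funext fun k => ?_) ?_
    · dsimp only
      rw [hsum2]
      exact lemC ω (‖ζ‖ : ℂ) _ (∑ j, (ζ j : ℂ) * v j) a (v k) (ζ k) Complex.I hD Complex.I_sq
    · dsimp only
      rw [hsum2]
      exact lemD ω (‖ζ‖ : ℂ) _ (∑ j, (ζ j : ℂ) * v j) a Complex.I hD Complex.I_sq
end

section
/- With λ_ε = ε + λ (ε > 0, Re λ ≥ 0), ζ = √μ ξ, ω = √(ρλ_ε + μ|ξ|²), the pressure-trace symbol for the case α = +1, β = +1 simplifies as: ρλ_ε (ω² + |ζ|²) / ((ω² + |ζ|²)² − 4ω|ζ|³) = (ω² + |ζ|²) / ((ω² − |ζ|²) + 4|ζ|² ω/(ω + |ζ|)). -/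
/-!
Since `ω² − |ζ|² = ρλ_ε`, the first denominator factors as `(ω² − |ζ|²)` times the second one,
and the identity is a cancellation. Nothing vanishes because `Re (ρλ_ε) > 0` while
`Re (ω / (ω + |ζ|)) ≥ 0` whenever `Re ω > 0`.
-/

theorem sq_add_sq_sq_sub_mul_eq_mul {K : Type*} [Field K] {w z : K} (hwz : w + z ≠ 0) :
    (w ^ 2 + z ^ 2) ^ 2 - 4 * w * z ^ 3
      = (w ^ 2 - z ^ 2) * ((w ^ 2 - z ^ 2) + 4 * z ^ 2 * w / (w + z)) := by
  field_simp
  ring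

namespace Complex

theorem re_div_add_ofReal_nonneg {w : ℂ} (hw : 0 ≤ w.re) {r : ℝ} (hr : 0 ≤ r) :
    0 ≤ (w / (w + r)).re := by
  have hnum : 0 ≤ w.re * (w.re + r) + w.im * w.im :=
    add_nonneg (mul_nonneg hw (add_nonneg hw hr)) (mul_self_nonneg _)
  rw [div_re, ← add_div, add_re, add_im, ofReal_re, ofReal_im, add_zero]
  exact div_nonneg hnum (normSq_nonneg _)

theorem add_ne_zero_of_re_pos_of_re_nonneg {a b : ℂ} (ha : 0 < a.re) (hb : 0 ≤ b.re) :
    a + b ≠ 0 := fun h => by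
  have := congrArg re h
  rw [add_re, zero_re] at this
  linarith

end Complex

theorem norm_sqrt_smul_sq {E : Type*} [SeminormedAddCommGroup E] [NormedSpace ℝ E]
    {μ : ℝ} (hμ : 0 ≤ μ) (x : E) : ‖Real.sqrt μ • x‖ ^ 2 = μ * ‖x‖ ^ 2 := by
  rw [norm_smul, Real.norm_of_nonneg (Real.sqrt_nonneg μ), mul_pow, Real.sq_sqrt hμ]

/-- The pressure-trace symbol identity for the case α = +1, β = +1:
with `λ_ε = ε + λ`, `ζ = √μ ξ` and `ω = √(ρλ_ε + μ|ξ|²)` (so `ω² − |ζ|² = ρλ_ε`),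
the denominators are nonzero and
`ρλ_ε (ω² + |ζ|²)/((ω² + |ζ|²)² − 4ω|ζ|³)
  = (ω² + |ζ|²)/((ω² − |ζ|²) + 4|ζ|² ω/(ω + |ζ|))`. -/
theorem pressure_trace_symbol_identity {m : ℕ}
    (ρ μ ε : ℝ) (hρ : 0 < ρ) (hμ : 0 < μ) (hε : 0 < ε)
    (lam : ℂ) (hlam : 0 ≤ lam.re) (ξ : EuclideanSpace ℝ (Fin m))
    (lamε : ℂ) (hlamε : lamε = ε + lam)
    (ζ : EuclideanSpace ℝ (Fin m)) (hζ : ζ = Real.sqrt μ • ξ)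
    (ω : ℂ) (hω2 : ω ^ 2 = ρ * lamε + μ * ‖ξ‖ ^ 2) (hωre : 0 < ω.re) :
    ((ω ^ 2 + (‖ζ‖ : ℂ) ^ 2) ^ 2 - 4 * ω * (‖ζ‖ : ℂ) ^ 3 ≠ 0)
    ∧ ((ω ^ 2 - (‖ζ‖ : ℂ) ^ 2) + 4 * (‖ζ‖ : ℂ) ^ 2 * ω / (ω + (‖ζ‖ : ℂ)) ≠ 0)
    ∧ (ρ * lamε * (ω ^ 2 + (‖ζ‖ : ℂ) ^ 2)
          / ((ω ^ 2 + (‖ζ‖ : ℂ) ^ 2) ^ 2 - 4 * ω * (‖ζ‖ : ℂ) ^ 3)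
        = (ω ^ 2 + (‖ζ‖ : ℂ) ^ 2)
          / ((ω ^ 2 - (‖ζ‖ : ℂ) ^ 2) + 4 * (‖ζ‖ : ℂ) ^ 2 * ω / (ω + (‖ζ‖ : ℂ)))) := by
  have hdiff : ω ^ 2 - (‖ζ‖ : ℂ) ^ 2 = ρ * lamε := by
    rw [hω2, hζ, ← Complex.ofReal_pow ‖√μ • ξ‖, norm_sqrt_smul_sq hμ.le]
    push_cast
    ring
  have hpos : 0 < ((ρ : ℂ) * lamε).re := by
    simp only [hlamε, Complex.mul_re, Complex.add_re, Complex.add_im, Complex.ofReal_re,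
      Complex.ofReal_im, zero_mul, sub_zero]
    positivity
  have hD : (ρ : ℂ) * lamε + 4 * (‖ζ‖ : ℂ) ^ 2 * ω / (ω + (‖ζ‖ : ℂ)) ≠ 0 := by
    refine Complex.add_ne_zero_of_re_pos_of_re_nonneg hpos ?_
    have hcoef : 4 * (‖ζ‖ : ℂ) ^ 2 * ω / (ω + (‖ζ‖ : ℂ))
        = ((4 * ‖ζ‖ ^ 2 : ℝ) : ℂ) * (ω / (ω + (‖ζ‖ : ℂ))) := by
      push_cast
      ring
    rw [hcoef, Complex.re_ofReal_mul]
    exact mul_nonneg (by positivity) (Complex.re_div_add_ofReal_nonneg hωre.le (norm_nonneg ζ))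
  have hne : (ρ : ℂ) * lamε ≠ 0 := fun h => by simp [h] at hpos
  have hsum : ω + (‖ζ‖ : ℂ) ≠ 0 :=
    Complex.add_ne_zero_of_re_pos_of_re_nonneg hωre (by rw [Complex.ofReal_re]; exact norm_nonneg ζ)
  rw [sq_add_sq_sq_sub_mul_eq_mul hsum, hdiff]
  exact ⟨mul_ne_zero hne hD, hD, mul_div_mul_left _ _ hne⟩
end
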